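/- arXiv:1911.00761 — 8 statements merged into one kernel-verified Lean document; each statement's English description precedes it below -/
import Mathlib

section
/- Let T be a finite nonempty type, let ε ≥ 0 be a real number, and let f, g, b : T → ℝ be nonnegative functions such that ∑_{z∈T} g(z)·b(z) > 0 and for every z ∈ T, e^{-ε}·g(z) ≤ f(z) ≤ e^{ε}·g(z). Then ∑_{z∈T} f(z)·b(z) > 0 and for every x ∈ T, e^{-2ε} · (g(x)·b(x) / ∑_{z∈T} g(z)·b(z)) ≤ f(x)·b(x) / ∑_{z∈T} f(z)·b(z) ≤ e^{2ε} · (g(x)·b(x) / ∑_{z∈T} g(z)·b(z)). -/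
/-! The numerator `f x * b x` of the posterior is within a factor `e^ε` of `g x * b x`, and so is
the normalising constant `∑ z, f z * b z` of `∑ z, g z * b z`; the two factors compound to at
most `e^{2ε}`. The lower bound is the upper bound with `f` and `g` exchanged. -/

open Finset Real

/-- The posterior of the prior `b` after observing an outcome of likelihood `p`. -/
noncomputable def posterior {T : Type*} [Fintype T] (p b : T → ℝ) (x : T) : ℝ :=
  p x * b x / ∑ z, p z * b z

theorem div_le_mul_mul_div {a a' s s' c d : ℝ} (hc : 0 ≤ c) (ha' : 0 ≤ a') (hs : 0 < s)
    (hs' : 0 < s') (ha : a ≤ c * a') (hs's : s' ≤ d * s) : a / s ≤ c * d * (a' / s') := by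
  rw [div_le_iff₀ hs]
  calc a ≤ c * (a' / s') * s' := by rwa [mul_assoc, div_mul_cancel₀ _ hs'.ne']
    _ ≤ c * (a' / s') * (d * s) := by gcongr
    _ = c * d * (a' / s') * s := by ring

section

variable {T : Type*} [Fintype T] {f g b : T → ℝ} {c : ℝ}

theorem sum_mul_le_mul_sum_mul (hb : ∀ z, 0 ≤ b z) (hfg : ∀ z, f z ≤ c * g z) :
    ∑ z, f z * b z ≤ c * ∑ z, g z * b z := by
  rw [mul_sum]
  refine sum_le_sum fun z _ => ?_
  rw [← mul_assoc]
  exact mul_le_mul_of_nonneg_right (hfg z) (hb z)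

theorem posterior_le_sq_mul_posterior (hc : 0 ≤ c) (hb : ∀ z, 0 ≤ b z) (hg : ∀ z, 0 ≤ g z)
    (hf_sum : 0 < ∑ z, f z * b z) (hg_sum : 0 < ∑ z, g z * b z)
    (hfg : ∀ z, f z ≤ c * g z) (hgf : ∀ z, g z ≤ c * f z) (x : T) :
    posterior f b x ≤ c ^ 2 * posterior g b x := by
  rw [sq]
  refine div_le_mul_mul_div hc (mul_nonneg (hg x) (hb x)) hf_sum hg_sum ?_
    (sum_mul_le_mul_sum_mul hb hgf)
  rw [← mul_assoc]
  exact mul_le_mul_of_nonneg_right (hfg x) (hb x)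

end

theorem posterior_pointwise_indistinguishable_general
    {T : Type*} [Fintype T] (ε : ℝ)
    (f g b : T → ℝ)
    (hg : ∀ z, 0 ≤ g z) (hb : ∀ z, 0 ≤ b z)
    (hpos : 0 < ∑ z, g z * b z)
    (hlo : ∀ z, Real.exp (-ε) * g z ≤ f z)
    (hhi : ∀ z, f z ≤ Real.exp ε * g z) :
    0 < ∑ z, f z * b z ∧
      ∀ x : T,
        Real.exp (-(2 * ε)) * (g x * b x / ∑ z, g z * b z)
            ≤ f x * b x / ∑ z, f z * b z ∧
        f x * b x / ∑ z, f z * b z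
            ≤ Real.exp (2 * ε) * (g x * b x / ∑ z, g z * b z) := by
  have hgf : ∀ z, g z ≤ exp ε * f z := fun z => by
    rw [← inv_mul_le_iff₀ (exp_pos ε), ← exp_neg]
    exact hlo z
  have hf : ∀ z, 0 ≤ f z := fun z => (mul_nonneg (exp_pos _).le (hg z)).trans (hlo z)
  have hf_sum : 0 < ∑ z, f z * b z :=
    pos_of_mul_pos_right (hpos.trans_le (sum_mul_le_mul_sum_mul hb hgf)) (exp_pos ε).le
  have hexp : exp (2 * ε) = exp ε ^ 2 := by rw [← exp_nat_mul]; norm_num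
  refine ⟨hf_sum, fun x => ⟨?_, ?_⟩⟩
  · rw [exp_neg, inv_mul_le_iff₀ (exp_pos _), hexp]
    exact posterior_le_sq_mul_posterior (exp_pos ε).le hb hf hpos hf_sum hgf hhi x
  · rw [hexp]
    exact posterior_le_sq_mul_posterior (exp_pos ε).le hb hg hf_sum hpos hhi hgf x

theorem posterior_pointwise_indistinguishable
    {T : Type*} [Fintype T] [Nonempty T] (ε : ℝ) (hε : 0 ≤ ε)
    (f g b : T → ℝ)
    (hf : ∀ z, 0 ≤ f z) (hg : ∀ z, 0 ≤ g z) (hb : ∀ z, 0 ≤ b z)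
    (hpos : 0 < ∑ z, g z * b z)
    (hlo : ∀ z, Real.exp (-ε) * g z ≤ f z)
    (hhi : ∀ z, f z ≤ Real.exp ε * g z) :
    0 < ∑ z, f z * b z ∧
      ∀ x : T,
        Real.exp (-(2 * ε)) * (g x * b x / ∑ z, g z * b z)
            ≤ f x * b x / ∑ z, f z * b z ∧
        f x * b x / ∑ z, f z * b z
            ≤ Real.exp (2 * ε) * (g x * b x / ∑ z, g z * b z) :=
  posterior_pointwise_indistinguishable_general ε f g b hg hb hpos hlo hhi
end

section
/- Let T be a finite type, let ε ≥ 0 be a real number, and let p, q : T → ℝ be nonnegative functions with ∑_{t∈T} p(t) = 1 and ∑_{t∈T} q(t) = 1, such that for every a ∈ T, e^{-ε}·q(a) ≤ p(a) ≤ e^{ε}·q(a). Then for every subset S ⊆ T, |∑_{a∈S} p(a) − ∑_{a∈S} q(a)| ≤ e^{ε} − 1. -/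
open Finset

theorem abs_sub_le_sub_one_of_inv_mul_le_of_le_mul {K : Type*} [Field K] [LinearOrder K]
    [IsStrictOrderedRing K] {c x y : K} (hc : 1 ≤ c) (hy : y ≤ 1)
    (hlo : c⁻¹ * y ≤ x) (hhi : x ≤ c * y) : |x - y| ≤ c - 1 := by
  rw [abs_sub_le_iff]
  constructor
  · calc x - y ≤ (c - 1) * y := by linarith
      _ ≤ c - 1 := mul_le_of_le_one_right (sub_nonneg.2 hc) hy
  · have hc₀ : c ≠ 0 := (zero_lt_one.trans_le hc).ne'
    have hgap : 0 ≤ 1 - c⁻¹ := sub_nonneg.2 (inv_le_one_of_one_le₀ hc)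
    calc y - x ≤ (1 - c⁻¹) * y := by linarith
      _ ≤ 1 - c⁻¹ := mul_le_of_le_one_right hgap hy
      _ ≤ c * (1 - c⁻¹) := le_mul_of_one_le_left hgap hc
      _ = c - 1 := by rw [mul_sub, mul_one, mul_inv_cancel₀ hc₀]

theorem pointwise_indistinguishable_implies_SD_le_general
    {T : Type*} [Fintype T] (ε : ℝ) (hε : 0 ≤ ε)
    (p q : T → ℝ)
    (hq : ∀ t, 0 ≤ q t)
    (hqs : ∑ t, q t = 1)
    (hlo : ∀ a, Real.exp (-ε) * q a ≤ p a)
    (hhi : ∀ a, p a ≤ Real.exp ε * q a) :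
    ∀ S : Finset T, |∑ a ∈ S, p a - ∑ a ∈ S, q a| ≤ Real.exp ε - 1 := by
  intro S
  have hS : ∑ a ∈ S, q a ≤ 1 := hqs ▸ sum_le_univ_sum_of_nonneg hq
  apply abs_sub_le_sub_one_of_inv_mul_le_of_le_mul (Real.one_le_exp hε) hS
  · rw [← Real.exp_neg, mul_sum]
    exact sum_le_sum fun a _ ↦ hlo a
  · rw [mul_sum]
    exact sum_le_sum fun a _ ↦ hhi a

theorem pointwise_indistinguishable_implies_SD_le
    {T : Type*} [Fintype T] (ε : ℝ) (hε : 0 ≤ ε)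
    (p q : T → ℝ)
    (hp : ∀ t, 0 ≤ p t) (hq : ∀ t, 0 ≤ q t)
    (hps : ∑ t, p t = 1) (hqs : ∑ t, q t = 1)
    (hlo : ∀ a, Real.exp (-ε) * q a ≤ p a)
    (hhi : ∀ a, p a ≤ Real.exp ε * q a) :
    ∀ S : Finset T, |∑ a ∈ S, p a - ∑ a ∈ S, q a| ≤ Real.exp ε - 1 :=
  pointwise_indistinguishable_implies_SD_le_general ε hε p q hq hqs hlo hhi
end

section
/- Let 𝒟 be a finite nonempty type with a distinguished default element ⊥ ∈ 𝒟, let n ∈ ℕ, let Ω be a finite type, let ε ≥ 0, and let Y : (Fin n → 𝒟) → Ω → ℝ be a mechanism (nonnegative with ∑_{ω∈Ω} Y(x)(ω) = 1 for every database x : Fin n → 𝒟). Suppose Y satisfies ε-differential privacy: for every x : Fin n → 𝒟, every i : Fin n, every v ∈ 𝒟, and every ω ∈ Ω, Y(x)(ω) ≤ e^{ε} · Y(Function.update x i v)(ω). Then for every prior b : (Fin n → 𝒟) → ℝ (nonnegative with ∑_x b(x) = 1), every i : Fin n, every ω ∈ Ω such that ∑_z Y(z)(ω)·b(z) > 0 and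 ∑_z Y(Function.update z i ⊥)(ω)·b(z) > 0, and every set S of databases, |∑_{x∈S} Y(x)(ω)·b(x)/∑_z Y(z)(ω)·b(z) − ∑_{x∈S} Y(Function.update x i ⊥)(ω)·b(x)/∑_z Y(Function.update z i ⊥)(ω)·b(z)| ≤ e^{2ε} − 1. -/
/-!
If two nonnegative weight functions agree up to a factor `e ≥ 1` pointwise, then so do their
totals, and the normalized weight of any set changes by at most a factor `e ^ 2`; hence the two
normalizations are within `e ^ 2 - 1` in statistical distance. Differential privacy makes
`x ↦ Y x ω * b x` and `x ↦ Y x₋ᵢ ω * b x` such a pair with `e = exp ε`, since `x` and `x₋ᵢ`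
differ in at most one record.
-/

open Finset

lemma div_sub_div_le_sq_sub_one {e a c s t : ℝ} (he : 1 ≤ e) (hac : a ≤ e * c)
    (hts : t ≤ e * s) (hc : 0 ≤ c) (hct : c ≤ t) (hs : 0 < s) (ht : 0 < t) :
    a / s - c / t ≤ e ^ 2 - 1 := by
  have hratio : a / s ≤ e ^ 2 * (c / t) := by
    rw [div_le_iff₀ hs]
    calc a ≤ e * c * 1 := by rwa [mul_one]
      _ ≤ e * c * (e * s / t) := by
          gcongr
          exact (one_le_div ht).2 hts
      _ = e ^ 2 * (c / t) * s := by ring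
  have hct' : (e ^ 2 - 1) * (c / t) ≤ e ^ 2 - 1 :=
    mul_le_of_le_one_right (by nlinarith) ((div_le_one ht).2 hct)
  linarith

lemma abs_sum_div_sum_sub_sum_div_sum_le {α : Type*} [Fintype α] {p q : α → ℝ} {e : ℝ}
    (he : 1 ≤ e) (hp : ∀ x, 0 ≤ p x) (hq : ∀ x, 0 ≤ q x)
    (hpq : ∀ x, p x ≤ e * q x) (hqp : ∀ x, q x ≤ e * p x)
    (hp_pos : 0 < ∑ x, p x) (hq_pos : 0 < ∑ x, q x) (S : Finset α) :
    |(∑ x ∈ S, p x) / (∑ x, p x) - (∑ x ∈ S, q x) / (∑ x, q x)| ≤ e ^ 2 - 1 := by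
  have sum_le {f g : α → ℝ} (hfg : ∀ x, f x ≤ e * g x) (T : Finset α) :
      ∑ x ∈ T, f x ≤ e * ∑ x ∈ T, g x := by
    rw [mul_sum]
    exact sum_le_sum fun x _ => hfg x
  have subset_le {f : α → ℝ} (hf : ∀ x, 0 ≤ f x) : ∑ x ∈ S, f x ≤ ∑ x, f x :=
    sum_le_sum_of_subset_of_nonneg (subset_univ S) fun x _ _ => hf x
  rw [abs_sub_le_iff]
  exact ⟨div_sub_div_le_sq_sub_one he (sum_le hpq S) (sum_le hqp univ)
      (sum_nonneg fun x _ => hq x) (subset_le hq) hp_pos hq_pos,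
    div_sub_div_le_sq_sub_one he (sum_le hqp S) (sum_le hpq univ)
      (sum_nonneg fun x _ => hp x) (subset_le hp) hq_pos hp_pos⟩

lemma apply_update_le_exp_mul {D Ω : Type*} {n : ℕ} {ε : ℝ} {Y : (Fin n → D) → Ω → ℝ}
    (hDP : ∀ (x : Fin n → D) (i : Fin n) (v : D) (ω : Ω),
      Y x ω ≤ Real.exp ε * Y (Function.update x i v) ω)
    (x : Fin n → D) (i : Fin n) (v : D) (ω : Ω) :
    Y (Function.update x i v) ω ≤ Real.exp ε * Y x ω := by
  simpa using hDP (Function.update x i v) i (x i) ω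

theorem dp_implies_semantic_privacy_general
    {D : Type*} [Fintype D] (dflt : D) (n : ℕ)
    {Ω : Type*} (ε : ℝ) (hε : 0 ≤ ε)
    (Y : (Fin n → D) → Ω → ℝ)
    (hYnn : ∀ x ω, 0 ≤ Y x ω)
    (hDP : ∀ (x : Fin n → D) (i : Fin n) (v : D) (ω : Ω),
      Y x ω ≤ Real.exp ε * Y (Function.update x i v) ω) :
    ∀ (b : (Fin n → D) → ℝ), (∀ x, 0 ≤ b x) → (∑ x, b x = 1) →
      ∀ (i : Fin n) (ω : Ω),
        0 < ∑ z, Y z ω * b z →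
        0 < ∑ z, Y (Function.update z i dflt) ω * b z →
        ∀ S : Finset (Fin n → D),
          |(∑ x ∈ S, Y x ω * b x) / (∑ z, Y z ω * b z) -
              (∑ x ∈ S, Y (Function.update x i dflt) ω * b x) /
                (∑ z, Y (Function.update z i dflt) ω * b z)|
            ≤ Real.exp (2 * ε) - 1 := by
  intro b hb _ i ω hpos hpos' S
  rw [show Real.exp (2 * ε) = Real.exp ε ^ 2 by rw [← Real.exp_nat_mul]; norm_num]
  refine abs_sum_div_sum_sub_sum_div_sum_le (Real.one_le_exp hε)
    (fun x => mul_nonneg (hYnn x ω) (hb x)) (fun x => mul_nonneg (hYnn _ ω) (hb x))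
    (fun x => ?_) (fun x => ?_) hpos hpos' S
  · rw [← mul_assoc]
    exact mul_le_mul_of_nonneg_right (hDP x i dflt ω) (hb x)
  · rw [← mul_assoc]
    exact mul_le_mul_of_nonneg_right (apply_update_le_exp_mul hDP x i dflt ω) (hb x)

theorem dp_implies_semantic_privacy
    {D : Type*} [Fintype D] [Nonempty D] (dflt : D) (n : ℕ)
    {Ω : Type*} [Fintype Ω] (ε : ℝ) (hε : 0 ≤ ε)
    (Y : (Fin n → D) → Ω → ℝ)
    (hYnn : ∀ x ω, 0 ≤ Y x ω) (hYsum : ∀ x, ∑ ω, Y x ω = 1)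
    (hDP : ∀ (x : Fin n → D) (i : Fin n) (v : D) (ω : Ω),
      Y x ω ≤ Real.exp ε * Y (Function.update x i v) ω) :
    ∀ (b : (Fin n → D) → ℝ), (∀ x, 0 ≤ b x) → (∑ x, b x = 1) →
      ∀ (i : Fin n) (ω : Ω),
        0 < ∑ z, Y z ω * b z →
        0 < ∑ z, Y (Function.update z i dflt) ω * b z →
        ∀ S : Finset (Fin n → D),
          |(∑ x ∈ S, Y x ω * b x) / (∑ z, Y z ω * b z) -
              (∑ x ∈ S, Y (Function.update x i dflt) ω * b x) /
                (∑ z, Y (Function.update z i dflt) ω * b z)|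
            ≤ Real.exp (2 * ε) - 1 :=
  dp_implies_semantic_privacy_general dflt n ε hε Y hYnn hDP
end

section
/- Let T and Ω be finite types, let ε ≥ 0 be a real number, and let M, N : T → Ω → ℝ be nonnegative functions such that for every t ∈ T and ω ∈ Ω, e^{-ε}·N(t)(ω) ≤ M(t)(ω) ≤ e^{ε}·N(t)(ω). Then for every nonnegative prior b : T → ℝ with ∑_{t∈T} b(t) = 1, and every ω ∈ Ω with ∑_{z∈T} N(z)(ω)·b(z) > 0, it holds that ∑_{z∈T} M(z)(ω)·b(z) > 0 and for every subset S ⊆ T, |∑_{t∈S} M(t)(ω)·b(t)/∑_{z∈T} M(z)(ω)·b(z) − ∑_{t∈S} N(t)(ω)·b(t)/∑_{z∈T} N(z)(ω)·b(z)| ≤ e^{2ε} − 1. -/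
/-!
Write `f t = M t ω * b t` and `g t = N t ω * b t` for the unnormalised posterior weights. Bayesian
differential privacy says `f ≤ e^ε g` and `g ≤ e^ε f` pointwise, hence on every event `S` and on
the whole space. Normalising, each posterior probability of `S` is at most `e^{2ε}` times the other,
and two numbers in `(-∞, 1]` within a factor `c ≥ 1` of each other differ by at most `c - 1`.
-/

open Finset

theorem abs_sub_le_sub_one_of_le_mul {p q c : ℝ} (hp : p ≤ 1) (hq : q ≤ 1) (hc : 1 ≤ c)
    (hpq : p ≤ c * q) (hqp : q ≤ c * p) : |p - q| ≤ c - 1 := by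
  rw [abs_le]
  constructor <;> nlinarith

theorem div_le_sq_mul_div {a b A B c : ℝ} (hA : 0 < A) (hB : 0 < B) (hb : 0 ≤ b) (hc : 0 ≤ c)
    (hab : a ≤ c * b) (hBA : B ≤ c * A) : a / A ≤ c ^ 2 * (b / B) := by
  rw [div_le_iff₀ hA]
  calc a ≤ c * b := hab
    _ = c * (b / B) * B := by field_simp
    _ ≤ c * (b / B) * (c * A) := by gcongr
    _ = c ^ 2 * (b / B) * A := by ring

theorem sum_div_sum_univ_le_one {ι : Type*} [Fintype ι] {f : ι → ℝ} (hf : ∀ i, 0 ≤ f i)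
    (s : Finset ι) : (∑ i ∈ s, f i) / ∑ i, f i ≤ 1 :=
  div_le_one_of_le₀ (sum_le_univ_sum_of_nonneg hf) (sum_nonneg fun i _ => hf i)

theorem sum_le_mul_sum_of_le_mul {ι : Type*} {c : ℝ} {f g : ι → ℝ} (h : ∀ i, f i ≤ c * g i)
    (s : Finset ι) : ∑ i ∈ s, f i ≤ c * ∑ i ∈ s, g i := by
  rw [mul_sum]
  exact sum_le_sum fun i _ => h i

section RelativeBound

variable {ι : Type*} [Fintype ι] {c : ℝ} {f g : ι → ℝ}

theorem sum_pos_of_le_mul (hc : 0 ≤ c) (hgf : ∀ i, g i ≤ c * f i) (hg_pos : 0 < ∑ i, g i) :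
    0 < ∑ i, f i := by
  nlinarith [sum_le_mul_sum_of_le_mul hgf univ]

theorem sum_div_sum_le_sq_mul (hc : 0 ≤ c) (hg : ∀ i, 0 ≤ g i)
    (hfg : ∀ i, f i ≤ c * g i) (hgf : ∀ i, g i ≤ c * f i)
    (hf_pos : 0 < ∑ i, f i) (hg_pos : 0 < ∑ i, g i) (s : Finset ι) :
    (∑ i ∈ s, f i) / ∑ i, f i ≤ c ^ 2 * ((∑ i ∈ s, g i) / ∑ i, g i) :=
  div_le_sq_mul_div hf_pos hg_pos (sum_nonneg fun i _ => hg i) hc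
    (sum_le_mul_sum_of_le_mul hfg s) (sum_le_mul_sum_of_le_mul hgf univ)

theorem abs_sum_div_sum_sub_sum_div_sum_le_s4 (hc : 1 ≤ c) (hf : ∀ i, 0 ≤ f i)
    (hg : ∀ i, 0 ≤ g i) (hfg : ∀ i, f i ≤ c * g i) (hgf : ∀ i, g i ≤ c * f i)
    (hg_pos : 0 < ∑ i, g i) (s : Finset ι) :
    |(∑ i ∈ s, f i) / (∑ i, f i) - (∑ i ∈ s, g i) / ∑ i, g i| ≤ c ^ 2 - 1 := by
  have hc0 : 0 ≤ c := zero_le_one.trans hc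
  have hf_pos := sum_pos_of_le_mul hc0 hgf hg_pos
  exact abs_sub_le_sub_one_of_le_mul (sum_div_sum_univ_le_one hf s)
    (sum_div_sum_univ_le_one hg s) (one_le_pow₀ hc)
    (sum_div_sum_le_sq_mul hc0 hg hfg hgf hf_pos hg_pos s)
    (sum_div_sum_le_sq_mul hc0 hf hgf hfg hg_pos hf_pos s)

end RelativeBound

theorem bdp_implies_bayesian_semantic_privacy
    {T : Type*} [Fintype T] {Ω : Type*} [Fintype Ω] (ε : ℝ) (hε : 0 ≤ ε)
    (M N : T → Ω → ℝ)
    (hM : ∀ t ω, 0 ≤ M t ω) (hN : ∀ t ω, 0 ≤ N t ω)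
    (hlo : ∀ t ω, Real.exp (-ε) * N t ω ≤ M t ω)
    (hhi : ∀ t ω, M t ω ≤ Real.exp ε * N t ω) :
    ∀ (b : T → ℝ), (∀ t, 0 ≤ b t) → (∑ t, b t = 1) →
      ∀ ω : Ω, 0 < ∑ z, N z ω * b z →
        0 < ∑ z, M z ω * b z ∧
        ∀ S : Finset T,
          |(∑ t ∈ S, M t ω * b t) / (∑ z, M z ω * b z) -
              (∑ t ∈ S, N t ω * b t) / (∑ z, N z ω * b z)|
            ≤ Real.exp (2 * ε) - 1 := by
  intro b hb _ ω hN_pos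
  have hMN : ∀ t, M t ω * b t ≤ Real.exp ε * (N t ω * b t) := fun t => by
    rw [← mul_assoc]
    exact mul_le_mul_of_nonneg_right (hhi t ω) (hb t)
  have hNM : ∀ t, N t ω * b t ≤ Real.exp ε * (M t ω * b t) := fun t => by
    rw [← mul_assoc]
    refine mul_le_mul_of_nonneg_right ?_ (hb t)
    have h := hlo t ω
    rwa [Real.exp_neg, inv_mul_le_iff₀ (Real.exp_pos ε)] at h
  refine ⟨sum_pos_of_le_mul (Real.exp_pos ε).le hNM hN_pos, fun S => ?_⟩
  rw [two_mul, Real.exp_add, ← sq]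
  exact abs_sum_div_sum_sub_sum_div_sum_le_s4 (Real.one_le_exp hε)
    (fun t => mul_nonneg (hM t ω) (hb t)) (fun t => mul_nonneg (hN t ω) (hb t)) hMN hNM hN_pos S
end

section
/- Let P be a probability measure on a measurable space, let B and E be measurable events with 0 < P(B) < 1 and P(E ∩ Bᶜ) > 0, and let ε > 0. Set A = P(E | B) / P(E | Bᶜ) and let g : [0,1] → ℝ be defined by g(x) = (1−x)/(e^{−ε}−x) if 0 ≤ x ≤ 1/(1+e^{ε}) and g(x) = (e^{ε}−1+x)/x if 1/(1+e^{ε}) < x ≤ 1. Then [ P(B | E) ≤ e^{ε}·P(B) and P(Bᶜ | E) ≥ e^{−ε}·P(Bᶜ) ] if and only if A ≤ g(P(B)). -/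
/-!
Write `b = P(B)` and `A` for the likelihood ratio. By Bayes' rule the posteriors are
`P(B | E) = A b / (A b + 1 - b)` and `P(Bᶜ | E) = (1 - b) / (A b + 1 - b)`, so with `e = exp ε` the
two privacy conditions become the linear constraints `A (e⁻¹ - b) ≤ 1 - b` and
`A b ≤ e - 1 + b`. Hence `g(b)` is the smaller of the two resulting upper bounds on `A` (the
first constraint is vacuous when `b ≥ e⁻¹`), and the factorisation
`(e - 1 + b)(e⁻¹ - b) - (1 - b) b = (1 - e⁻¹)(1 - (1 + e) b)` shows that the smaller one
switches exactly at `b = 1 / (1 + e)`.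
-/

open MeasureTheory

/-- The function `g` from Lemma 1, with branches split at `1/(1+e^ε)`. -/
noncomputable def gFun (ε x : ℝ) : ℝ :=
  if x ≤ 1 / (1 + Real.exp ε) then (1 - x) / (Real.exp (-ε) - x)
  else (Real.exp ε - 1 + x) / x

section LikelihoodRatio

variable {e b p q A : ℝ}

lemma div_add_eq_bayes (hb0 : 0 < b) (hb1 : b < 1) (hp : 0 ≤ p) (hq : 0 < q) :
    p / (p + q) = p / b / (q / (1 - b)) * b / (p / b / (q / (1 - b)) * b + (1 - b)) := by
  have : 0 < 1 - b := by linarith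
  field_simp

lemma div_add_eq_bayes_compl (hb0 : 0 < b) (hb1 : b < 1) (hp : 0 ≤ p) (hq : 0 < q) :
    q / (p + q) = (1 - b) / (p / b / (q / (1 - b)) * b + (1 - b)) := by
  have : 0 < 1 - b := by linarith
  field_simp

lemma posterior_le_mul_prior_iff (he : 0 < e) (hb0 : 0 < b) (hb1 : b < 1) (hA : 0 ≤ A) :
    A * b / (A * b + (1 - b)) ≤ e * b ↔ A * (e⁻¹ - b) ≤ 1 - b := by
  have hden : 0 < A * b + (1 - b) := by nlinarith
  rw [div_le_iff₀ hden, mul_sub, ← div_eq_mul_inv, sub_le_iff_le_add, div_le_iff₀ he]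
  constructor <;> intro h <;> nlinarith

lemma mul_prior_le_posterior_iff (he : 0 < e) (hb0 : 0 < b) (hb1 : b < 1) (hA : 0 ≤ A) :
    e⁻¹ * (1 - b) ≤ (1 - b) / (A * b + (1 - b)) ↔ A * b ≤ e - 1 + b := by
  have hden : 0 < A * b + (1 - b) := by nlinarith
  rw [le_div_iff₀ hden, mul_right_comm, mul_le_iff_le_one_left (by linarith),
    inv_mul_le_one₀ he]
  constructor <;> intro h <;> linarith

lemma mul_inv_sub_sub_mul (he : e ≠ 0) (b : ℝ) :
    (e - 1 + b) * (e⁻¹ - b) - (1 - b) * b = (1 - e⁻¹) * (1 - (1 + e) * b) := by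
  field_simp
  ring

lemma lt_inv_of_le_one_div_one_add (he : 0 < e) (hb : b ≤ 1 / (1 + e)) : b < e⁻¹ :=
  hb.trans_lt (by rw [← one_div]; exact one_div_lt_one_div_of_lt he (by linarith))

lemma one_sub_div_inv_sub_le (he : 1 < e) (hb0 : 0 < b) (hb : b ≤ 1 / (1 + e)) :
    (1 - b) / (e⁻¹ - b) ≤ (e - 1 + b) / b := by
  have he0 : 0 < e := by linarith
  have hbe : (1 + e) * b ≤ 1 := by rwa [le_div_iff₀ (by linarith), mul_comm] at hb
  rw [div_le_div_iff₀ (sub_pos.mpr (lt_inv_of_le_one_div_one_add he0 hb)) hb0, ← sub_nonneg,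
    mul_inv_sub_sub_mul he0.ne']
  exact mul_nonneg (sub_pos.mpr (inv_lt_one_of_one_lt₀ he)).le (sub_nonneg.mpr hbe)

lemma le_one_sub_div_inv_sub (he : 1 < e) (hb : 1 / (1 + e) < b) (hbe : b < e⁻¹) :
    (e - 1 + b) / b ≤ (1 - b) / (e⁻¹ - b) := by
  have hb0 : 0 < b := lt_trans (by positivity) hb
  have hbe' : 1 < (1 + e) * b := by rwa [div_lt_iff₀ (by linarith), mul_comm] at hb
  rw [div_le_div_iff₀ hb0 (sub_pos.mpr hbe), ← sub_nonpos, mul_inv_sub_sub_mul (by positivity)]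
  exact mul_nonpos_of_nonneg_of_nonpos (sub_pos.mpr (inv_lt_one_of_one_lt₀ he)).le
    (sub_nonpos.mpr hbe'.le)

open Real in
lemma likelihood_bounds_iff_le_gFun {ε : ℝ} (hε : 0 < ε) (hb0 : 0 < b) (hb1 : b < 1)
    (hA : 0 ≤ A) :
    (A * ((exp ε)⁻¹ - b) ≤ 1 - b ∧ A * b ≤ exp ε - 1 + b) ↔ A ≤ gFun ε b := by
  have he : 1 < exp ε := one_lt_exp_iff.mpr hε
  rw [gFun, exp_neg]
  split_ifs with hsplit
  · have hgap : 0 < (exp ε)⁻¹ - b :=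
      sub_pos.mpr (lt_inv_of_le_one_div_one_add (by positivity) hsplit)
    rw [← le_div_iff₀ hgap, and_iff_left_of_imp]
    intro h
    exact (le_div_iff₀ hb0).mp (h.trans (one_sub_div_inv_sub_le he hb0 hsplit))
  · rw [← le_div_iff₀ hb0, and_iff_right_of_imp]
    intro h
    rcases le_or_gt ((exp ε)⁻¹ - b) 0 with hgap | hgap
    · linarith [mul_nonpos_of_nonneg_of_nonpos hA hgap]
    · rw [← le_div_iff₀ hgap]
      exact h.trans (le_one_sub_div_inv_sub he (not_le.mp hsplit) (sub_pos.mp hgap))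

end LikelihoodRatio

theorem membership_privacy_iff_ratio_le_g_general
    {α : Type*} [MeasurableSpace α] (P : Measure α) [IsProbabilityMeasure P]
    (B E : Set α) (hB : MeasurableSet B)
    (hB0 : 0 < (P B).toReal) (hB1 : (P B).toReal < 1)
    (hEBc : 0 < (P (E ∩ Bᶜ)).toReal)
    (ε : ℝ) (hε : 0 < ε) :
    ((P (B ∩ E)).toReal / (P E).toReal ≤ Real.exp ε * (P B).toReal ∧
        (P (Bᶜ ∩ E)).toReal / (P E).toReal ≥ Real.exp (-ε) * (P Bᶜ).toReal)
      ↔ ((P (E ∩ B)).toReal / (P B).toReal) /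
            ((P (E ∩ Bᶜ)).toReal / (P Bᶜ).toReal)
          ≤ gFun ε (P B).toReal := by
  simp only [← measureReal_def] at *
  have hEB : 0 ≤ P.real (E ∩ B) := measureReal_nonneg
  have hBc : P.real Bᶜ = 1 - P.real B := probReal_compl_eq_one_sub hB
  have hE : P.real E = P.real (E ∩ B) + P.real (E ∩ Bᶜ) := (measureReal_inter_add_sdiff hB).symm
  have hA : 0 ≤ P.real (E ∩ B) / P.real B / (P.real (E ∩ Bᶜ) / (1 - P.real B)) := by
    have : 0 < 1 - P.real B := by linarith
    positivity
  have he : 0 < Real.exp ε := Real.exp_pos ε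
  rw [Set.inter_comm B, Set.inter_comm Bᶜ, hE, hBc, div_add_eq_bayes hB0 hB1 hEB hEBc,
    div_add_eq_bayes_compl hB0 hB1 hEB hEBc, Real.exp_neg, ge_iff_le,
    posterior_le_mul_prior_iff he hB0 hB1 hA, mul_prior_le_posterior_iff he hB0 hB1 hA]
  exact likelihood_bounds_iff_le_gFun hε hB0 hB1 hA

theorem membership_privacy_iff_ratio_le_g
    {α : Type*} [MeasurableSpace α] (P : Measure α) [IsProbabilityMeasure P]
    (B E : Set α) (hB : MeasurableSet B) (hE : MeasurableSet E)
    (hB0 : 0 < (P B).toReal) (hB1 : (P B).toReal < 1)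
    (hEBc : 0 < (P (E ∩ Bᶜ)).toReal)
    (ε : ℝ) (hε : 0 < ε) :
    ((P (B ∩ E)).toReal / (P E).toReal ≤ Real.exp ε * (P B).toReal ∧
        (P (Bᶜ ∩ E)).toReal / (P E).toReal ≥ Real.exp (-ε) * (P Bᶜ).toReal)
      ↔ ((P (E ∩ B)).toReal / (P B).toReal) /
            ((P (E ∩ Bᶜ)).toReal / (P Bᶜ).toReal)
          ≤ gFun ε (P B).toReal :=
  membership_privacy_iff_ratio_le_g_general P B E hB hB0 hB1 hEBc ε hε
end

section
/- Let ε > 0 and A ≥ 0 be real numbers, and let x be a real number with 0 ≤ x ≤ 1. Let g : [0,1] → ℝ be defined by g(x) = (1−x)/(e^{−ε}−x) if 0 ≤ x ≤ 1/(1+e^{ε}) and g(x) = (e^{ε}−1+x)/x if 1/(1+e^{ε}) < x ≤ 1. Then [ 1 − x ≥ A·(e^{−ε} − x) and A·x + 1 − x ≤ e^{ε} ] if and only if A ≤ g(x). -/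
section Threshold

variable {E A x : ℝ}

lemma cross_difference_eq (hE : E ≠ 0) :
    (E - 1 + x) * (E⁻¹ - x) - x * (1 - x) = (1 - E⁻¹) * (1 - x * (1 + E)) := by
  field_simp
  ring

lemma mul_one_add_le_one_of_le_threshold (hE : 0 < E) (h : x ≤ 1 / (1 + E)) :
    x * (1 + E) ≤ 1 :=
  (le_div_iff₀ (by linarith)).mp h

lemma one_lt_mul_one_add_of_threshold_lt (hE : 0 < E) (h : 1 / (1 + E) < x) :
    1 < x * (1 + E) :=
  (div_lt_iff₀ (by linarith)).mp h

lemma lt_inv_of_le_threshold (hE : 0 < E) (h : x ≤ 1 / (1 + E)) : x < E⁻¹ :=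
  h.trans_lt (one_div_lt_one_div_of_lt hE (lt_one_add E) |>.trans_eq (one_div E))

lemma mul_one_sub_le_of_le_threshold (hE : 1 ≤ E) (h : x ≤ 1 / (1 + E)) :
    x * (1 - x) ≤ (E - 1 + x) * (E⁻¹ - x) := by
  have hE₀ : 0 < E := by linarith
  have hcross := cross_difference_eq (x := x) hE₀.ne'
  have ht : 0 ≤ 1 - E⁻¹ := sub_nonneg.mpr (inv_le_one_of_one_le₀ hE)
  have hx : 0 ≤ 1 - x * (1 + E) := sub_nonneg.mpr (mul_one_add_le_one_of_le_threshold hE₀ h)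
  nlinarith [mul_nonneg ht hx]

lemma le_mul_one_sub_of_threshold_lt (hE : 1 ≤ E) (h : 1 / (1 + E) < x) :
    (E - 1 + x) * (E⁻¹ - x) ≤ x * (1 - x) := by
  have hE₀ : 0 < E := by linarith
  have hcross := cross_difference_eq (x := x) hE₀.ne'
  have ht : 0 ≤ 1 - E⁻¹ := sub_nonneg.mpr (inv_le_one_of_one_le₀ hE)
  have hx : 1 - x * (1 + E) ≤ 0 :=
    sub_nonpos.mpr (one_lt_mul_one_add_of_threshold_lt hE₀ h).le
  nlinarith [mul_nonpos_of_nonneg_of_nonpos ht hx]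

lemma both_iff_of_le_threshold (hE : 1 ≤ E) (hx0 : 0 ≤ x) (h : x ≤ 1 / (1 + E)) :
    (A * (E⁻¹ - x) ≤ 1 - x ∧ A * x + 1 - x ≤ E) ↔ A ≤ (1 - x) / (E⁻¹ - x) := by
  have hpos : 0 < E⁻¹ - x := sub_pos.mpr (lt_inv_of_le_threshold (by linarith) h)
  rw [le_div_iff₀ hpos]
  refine ⟨And.left, fun hI => ⟨hI, ?_⟩⟩
  suffices A * x * (E⁻¹ - x) ≤ (E - 1 + x) * (E⁻¹ - x) by
    linarith [le_of_mul_le_mul_right this hpos]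
  calc A * x * (E⁻¹ - x) = x * (A * (E⁻¹ - x)) := by ring
    _ ≤ x * (1 - x) := mul_le_mul_of_nonneg_left hI hx0
    _ ≤ (E - 1 + x) * (E⁻¹ - x) := mul_one_sub_le_of_le_threshold hE h

lemma both_iff_of_threshold_lt (hE : 1 ≤ E) (hA : 0 ≤ A) (hx1 : x ≤ 1)
    (h : 1 / (1 + E) < x) :
    (A * (E⁻¹ - x) ≤ 1 - x ∧ A * x + 1 - x ≤ E) ↔ A ≤ (E - 1 + x) / x := by
  have hx0 : 0 < x := lt_trans (by positivity) h
  rw [le_div_iff₀ hx0]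
  refine ⟨fun hboth => by linarith [hboth.2], fun hII => ⟨?_, by linarith⟩⟩
  rcases le_or_gt E⁻¹ x with hle | hlt
  · nlinarith [mul_nonpos_of_nonneg_of_nonpos hA (sub_nonpos.mpr hle)]
  · suffices A * (E⁻¹ - x) * x ≤ (1 - x) * x from le_of_mul_le_mul_right this hx0
    calc A * (E⁻¹ - x) * x = A * x * (E⁻¹ - x) := by ring
      _ ≤ (E - 1 + x) * (E⁻¹ - x) := mul_le_mul_of_nonneg_right hII (sub_pos.mpr hlt).le
      _ ≤ x * (1 - x) := le_mul_one_sub_of_threshold_lt hE h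
      _ = (1 - x) * x := mul_comm _ _

end Threshold

theorem two_inequalities_iff_le_g
    (ε A x : ℝ) (hε : 0 < ε) (hA : 0 ≤ A) (hx0 : 0 ≤ x) (hx1 : x ≤ 1) :
    (1 - x ≥ A * (Real.exp (-ε) - x) ∧ A * x + 1 - x ≤ Real.exp ε) ↔
      A ≤ gFun ε x := by
  have hE : 1 ≤ Real.exp ε := Real.one_le_exp hε.le
  rw [gFun, Real.exp_neg]
  split_ifs with h
  · exact both_iff_of_le_threshold hE hx0 h
  · exact both_iff_of_threshold_lt hE hA hx1 (not_le.mp h)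
end

section
/- Let ε > 0 and let g : [0,1] → ℝ be defined by g(b) = (1−b)/(e^{−ε}−b) if 0 ≤ b ≤ 1/(1+e^{ε}) and g(b) = (e^{ε}−1+b)/b if 1/(1+e^{ε}) < b ≤ 1. Then: (i) for all b₁, b₂ with 0 ≤ b₁ ≤ b₂ ≤ 1/(1+e^{ε}), g(b₁) ≤ g(b₂); (ii) for all b₁, b₂ with 1/(1+e^{ε}) < b₁ ≤ b₂ ≤ 1, g(b₁) ≥ g(b₂); (iii) g(0) = g(1) = e^{ε}; and (iv) for every b with 0 ≤ b ≤ 1, g(b) ≥ e^{ε}. -/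
/-! Each branch of `g` is a Möbius map, `1 + (1 - e^{-ε}) / (e^{-ε} - b)` and `1 + (e^ε - 1) / b`,
so for `ε ≥ 0` the first increases and the second decreases; the minimum `e^ε` is therefore
attained at the endpoints `b = 0` and `b = 1`. -/

open Set Real

lemma monotoneOn_one_sub_div_sub {c : ℝ} (hc : c ≤ 1) :
    MonotoneOn (fun x : ℝ => (1 - x) / (c - x)) (Iio c) := by
  intro x hx y hy hxy
  rw [div_le_div_iff₀ (sub_pos.2 hx) (sub_pos.2 hy)]
  nlinarith

lemma antitoneOn_add_div_self {a : ℝ} (ha : 0 ≤ a) :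
    AntitoneOn (fun x : ℝ => (a + x) / x) (Ioi 0) := by
  intro x hx y hy hxy
  rw [div_le_div_iff₀ hy hx]
  nlinarith

namespace gFun

variable {ε : ℝ}

lemma threshold_pos (ε : ℝ) : 0 < 1 / (1 + exp ε) := by positivity

lemma threshold_lt_exp_neg (ε : ℝ) : 1 / (1 + exp ε) < exp (-ε) := by
  rw [exp_neg, ← one_div]
  exact one_div_lt_one_div_of_lt (exp_pos ε) (lt_one_add _)

lemma threshold_lt_one (ε : ℝ) : 1 / (1 + exp ε) < 1 := by
  rw [div_lt_one (by positivity)]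
  linarith [exp_pos ε]

lemma eq_of_le {x : ℝ} (hx : x ≤ 1 / (1 + exp ε)) :
    gFun ε x = (1 - x) / (exp (-ε) - x) := if_pos hx

lemma eq_of_lt {x : ℝ} (hx : 1 / (1 + exp ε) < x) :
    gFun ε x = (exp ε - 1 + x) / x := if_neg hx.not_ge

lemma monotoneOn_Iic (hε : 0 ≤ ε) : MonotoneOn (gFun ε) (Iic (1 / (1 + exp ε))) := by
  have hsub : Iic (1 / (1 + exp ε)) ⊆ Iio (exp (-ε)) :=
    Iic_subset_Iio.2 (threshold_lt_exp_neg ε)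
  refine ((monotoneOn_one_sub_div_sub (exp_le_one_iff.2 (neg_nonpos.2 hε))).mono hsub).congr ?_
  intro x hx
  exact (eq_of_le hx).symm

lemma antitoneOn_Ioi (hε : 0 ≤ ε) : AntitoneOn (gFun ε) (Ioi (1 / (1 + exp ε))) := by
  have hsub : Ioi (1 / (1 + exp ε)) ⊆ Ioi 0 := Ioi_subset_Ioi (threshold_pos ε).le
  refine ((antitoneOn_add_div_self (sub_nonneg.2 (one_le_exp hε))).mono hsub).congr ?_
  intro x hx
  exact (eq_of_lt hx).symm

lemma apply_zero (ε : ℝ) : gFun ε 0 = exp ε := by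
  rw [eq_of_le (threshold_pos ε).le, exp_neg]
  simp

lemma apply_one (ε : ℝ) : gFun ε 1 = exp ε := by
  rw [eq_of_lt (threshold_lt_one ε)]
  simp

end gFun

theorem gFun_monotonicity_and_min (ε : ℝ) (hε : 0 < ε) :
    (∀ b₁ b₂ : ℝ, 0 ≤ b₁ → b₁ ≤ b₂ → b₂ ≤ 1 / (1 + Real.exp ε) →
        gFun ε b₁ ≤ gFun ε b₂) ∧
    (∀ b₁ b₂ : ℝ, 1 / (1 + Real.exp ε) < b₁ → b₁ ≤ b₂ → b₂ ≤ 1 →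
        gFun ε b₂ ≤ gFun ε b₁) ∧
    (gFun ε 0 = Real.exp ε ∧ gFun ε 1 = Real.exp ε) ∧
    (∀ b : ℝ, 0 ≤ b → b ≤ 1 → Real.exp ε ≤ gFun ε b) := by
  have hmono : ∀ b₁ b₂ : ℝ, b₁ ≤ b₂ → b₂ ≤ 1 / (1 + exp ε) → gFun ε b₁ ≤ gFun ε b₂ :=
    fun _ _ h12 h2 => gFun.monotoneOn_Iic hε.le (h12.trans h2) h2 h12
  have hanti : ∀ b₁ b₂ : ℝ, 1 / (1 + exp ε) < b₁ → b₁ ≤ b₂ → gFun ε b₂ ≤ gFun ε b₁ :=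
    fun _ _ h1 h12 => gFun.antitoneOn_Ioi hε.le h1 (h1.trans_le h12) h12
  refine ⟨fun b₁ b₂ _ h12 h2 => hmono b₁ b₂ h12 h2, fun b₁ b₂ h1 h12 _ => hanti b₁ b₂ h1 h12,
    ⟨gFun.apply_zero ε, gFun.apply_one ε⟩, fun b hb0 hb1 => ?_⟩
  rcases le_or_gt b (1 / (1 + exp ε)) with hb | hb
  · simpa only [gFun.apply_zero] using hmono 0 b hb0 hb
  · simpa only [gFun.apply_one] using hanti b 1 hb hb1
end

section
/- Let P be a probability measure on a measurable space, let B and E be measurable events with 0 < P(B) < 1 and P(E ∩ Bᶜ) > 0, and let ε ≥ 0. If P(E | B) ≤ e^{ε}·P(E | Bᶜ), then P(B | E) ≤ e^{ε}·P(B) and P(Bᶜ | E) ≥ e^{−ε}·P(Bᶜ). -/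
/-!
Write `x = P(E ∩ B)`, `y = P(E ∩ Bᶜ)` and `b = P(B)`. Clearing denominators, the likelihood-ratio
hypothesis reads `x (1 - b) ≤ e^ε y b`, and Bayes' rule gives `P(B | E) = x / (x + y)`,
`P(Bᶜ | E) = y / (x + y)`. Both conclusions are then elementary: since `e^ε ≥ 1`,
`x = x b + x (1 - b) ≤ e^ε b (x + y)` and `(1 - b)(x + y) ≤ e^ε y b + e^ε y (1 - b) = e^ε y`.
-/

open MeasureTheory

section Posterior

variable {x y b e : ℝ}

lemma div_add_le_mul_of_mul_one_sub_le (hxy : 0 < x + y) (hx : 0 ≤ x) (hb : 0 ≤ b)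
    (he : 1 ≤ e) (h : x * (1 - b) ≤ e * y * b) : x / (x + y) ≤ e * b := by
  rw [div_le_iff₀ hxy]
  nlinarith [mul_nonneg (mul_nonneg hx hb) (sub_nonneg.2 he)]

lemma one_sub_div_le_div_add_of_mul_one_sub_le (hxy : 0 < x + y) (hy : 0 ≤ y) (hb : b ≤ 1)
    (he : 1 ≤ e) (h : x * (1 - b) ≤ e * y * b) : (1 - b) / e ≤ y / (x + y) := by
  rw [div_le_div_iff₀ (by linarith) hxy]
  nlinarith [mul_nonneg (mul_nonneg (sub_nonneg.2 hb) hy) (sub_nonneg.2 he)]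

end Posterior

theorem likelihood_ratio_implies_membership_privacy_general
    {α : Type*} [MeasurableSpace α] (P : Measure α) [IsProbabilityMeasure P]
    (B E : Set α) (hB : MeasurableSet B)
    (hB0 : 0 < (P B).toReal) (hB1 : (P B).toReal < 1)
    (hEBc : 0 < (P (E ∩ Bᶜ)).toReal)
    (ε : ℝ) (hε : 0 ≤ ε)
    (hratio : (P (E ∩ B)).toReal / (P B).toReal ≤
        Real.exp ε * ((P (E ∩ Bᶜ)).toReal / (P Bᶜ).toReal)) :
    (P (B ∩ E)).toReal / (P E).toReal ≤ Real.exp ε * (P B).toReal ∧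
      (P (Bᶜ ∩ E)).toReal / (P E).toReal ≥ Real.exp (-ε) * (P Bᶜ).toReal := by
  simp only [← measureReal_def] at *
  have hcompl : P.real Bᶜ = 1 - P.real B := probReal_compl_eq_one_sub hB
  have hsplit : P.real E = P.real (E ∩ B) + P.real (E ∩ Bᶜ) :=
    (measureReal_inter_add_sdiff hB).symm
  have he : 1 ≤ Real.exp ε := Real.one_le_exp hε
  have hcross : P.real (E ∩ B) * (1 - P.real B) ≤ Real.exp ε * P.real (E ∩ Bᶜ) * P.real B := by
    rwa [div_le_iff₀ hB0, ← mul_div_assoc, div_mul_eq_mul_div,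
      le_div_iff₀ (by linarith), hcompl] at hratio
  have hEB : 0 ≤ P.real (E ∩ B) := measureReal_nonneg
  have hE : 0 < P.real (E ∩ B) + P.real (E ∩ Bᶜ) := by linarith
  rw [Set.inter_comm B, Set.inter_comm Bᶜ, hsplit, hcompl, Real.exp_neg, ← div_eq_inv_mul]
  exact ⟨div_add_le_mul_of_mul_one_sub_le hE hEB hB0.le he hcross,
    one_sub_div_le_div_add_of_mul_one_sub_le hE hEBc.le hB1.le he hcross⟩

theorem likelihood_ratio_implies_membership_privacy
    {α : Type*} [MeasurableSpace α] (P : Measure α) [IsProbabilityMeasure P]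
    (B E : Set α) (hB : MeasurableSet B) (hE : MeasurableSet E)
    (hB0 : 0 < (P B).toReal) (hB1 : (P B).toReal < 1)
    (hEBc : 0 < (P (E ∩ Bᶜ)).toReal)
    (ε : ℝ) (hε : 0 ≤ ε)
    (hratio : (P (E ∩ B)).toReal / (P B).toReal ≤
        Real.exp ε * ((P (E ∩ Bᶜ)).toReal / (P Bᶜ).toReal)) :
    (P (B ∩ E)).toReal / (P E).toReal ≤ Real.exp ε * (P B).toReal ∧
      (P (Bᶜ ∩ E)).toReal / (P E).toReal ≥ Real.exp (-ε) * (P Bᶜ).toReal :=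
  likelihood_ratio_implies_membership_privacy_general P B E hB hB0 hB1 hEBc ε hε hratio
end
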